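/- arXiv:2405.18401 — 5 statements merged into one kernel-verified Lean document; each statement's English description precedes it below -/
import Mathlib

section
/- Cap-Ball-Duality (boundary case): let p ∈ ℝ^{d+1} with ‖p‖ = 1, b ∈ (−1, 1) with b + p_{d+1} > 0, and set α = (1 − b²)/(2(b + p_{d+1})). Then for every unit vector x ∈ ℝ^{d+1} with ⟨x, p⟩ = b and x_{d+1} ≠ −1, letting ĉ = (p − αv)/‖p − αv‖ one has ‖S⁻¹(x) − S⁻¹(ĉ)‖ = s·√((1 − b²)/(b + p_{d+1})²). -/
open scoped InnerProductSpace

/-- Append a coordinate `t` to a vector `x ∈ ℝ^d`, giving `(x, t) ∈ ℝ^{d+1}`. -/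
noncomputable def snocE {d : ℕ} (x : EuclideanSpace ℝ (Fin d)) (t : ℝ) :
    EuclideanSpace ℝ (Fin (d + 1)) :=
  (WithLp.equiv 2 (Fin (d + 1) → ℝ)).symm (Fin.snoc (WithLp.equiv 2 (Fin d → ℝ) x) t)

/-- Drop the last coordinate of `y ∈ ℝ^{d+1}`. -/
noncomputable def initE {d : ℕ} (y : EuclideanSpace ℝ (Fin (d + 1))) :
    EuclideanSpace ℝ (Fin d) :=
  (WithLp.equiv 2 (Fin d → ℝ)).symm (fun i => y i.castSucc)

/-- The inverse stereographic embedding `S(x) = (2s/(‖x‖² + s²)) • (x, s) − v`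
with `v = (0,…,0,1)`. -/
noncomputable def sphEmb (d : ℕ) (s : ℝ) (x : EuclideanSpace ℝ (Fin d)) :
    EuclideanSpace ℝ (Fin (d + 1)) :=
  (2 * s / (‖x‖ ^ 2 + s ^ 2)) • snocE x s - EuclideanSpace.single (Fin.last d) 1

/-- The unembedding `S⁻¹(y) = s·(y₁,…,y_d)/(1 + y_{d+1})`. -/
noncomputable def sphUnemb (d : ℕ) (s : ℝ) (y : EuclideanSpace ℝ (Fin (d + 1))) :
    EuclideanSpace ℝ (Fin d) :=
  (s / (1 + y (Fin.last d))) • initE y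

lemma inner_initE' {d : ℕ} (y z : EuclideanSpace ℝ (Fin (d+1))) :
    ⟪initE y, initE z⟫_ℝ = ⟪y, z⟫_ℝ - y (Fin.last d) * z (Fin.last d) := by
  simp [initE, PiLp.inner_apply, RCLike.inner_apply, Fin.sum_univ_castSucc]; ring

lemma dist_formula' {d : ℕ} (s : ℝ) (y z : EuclideanSpace ℝ (Fin (d+1)))
    (hy : ‖y‖ = 1) (hz : ‖z‖ = 1)
    (hy' : 1 + y (Fin.last d) ≠ 0) (hz' : 1 + z (Fin.last d) ≠ 0) :
    ‖sphUnemb d s y - sphUnemb d s z‖ ^ 2 =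
      2 * s ^ 2 * (1 - ⟪y, z⟫_ℝ) / ((1 + y (Fin.last d)) * (1 + z (Fin.last d))) := by
  have hny : ⟪y, y⟫_ℝ = 1 := by rw [real_inner_self_eq_norm_sq, hy]; ring
  have hnz : ⟪z, z⟫_ℝ = 1 := by rw [real_inner_self_eq_norm_sq, hz]; ring
  rw [← real_inner_self_eq_norm_sq]
  simp only [sphUnemb, inner_sub_sub_self, real_inner_smul_left, real_inner_smul_right,
    inner_initE', hny, hnz, real_inner_comm y z]
  field_simp
  ring

set_option maxHeartbeats 1000000 in
theorem stmt10 (d : ℕ) (s : ℝ) (hs : 0 < s)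
    (p : EuclideanSpace ℝ (Fin (d + 1))) (hp : ‖p‖ = 1)
    (b : ℝ) (hb : b ∈ Set.Ioo (-1 : ℝ) 1) (hbp : 0 < b + p (Fin.last d))
    (α : ℝ) (hα : α = (1 - b ^ 2) / (2 * (b + p (Fin.last d))))
    (x : EuclideanSpace ℝ (Fin (d + 1))) (hx : ‖x‖ = 1)
    (hxp : ⟪x, p⟫_ℝ = b) (hx' : x (Fin.last d) ≠ -1)
    (c : EuclideanSpace ℝ (Fin (d + 1)))
    (hc : c = ‖p - α • EuclideanSpace.single (Fin.last d) 1‖⁻¹ •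
      (p - α • EuclideanSpace.single (Fin.last d) 1)) :
    ‖sphUnemb d s x - sphUnemb d s c‖ =
      s * Real.sqrt ((1 - b ^ 2) / (b + p (Fin.last d)) ^ 2) := by
  set pl := p (Fin.last d) with hpl
  set X := x (Fin.last d) with hX
  set v : EuclideanSpace ℝ (Fin (d+1)) := EuclideanSpace.single (Fin.last d) 1 with hv
  clear_value pl X v
  have hvn : ‖v‖ = 1 := by simp [hv, EuclideanSpace.norm_single]
  have hpv : ⟪p, v⟫_ℝ = pl := by simp [hv, EuclideanSpace.inner_single_right, hpl]
  have hxv : ⟪x, v⟫_ℝ = X := by simp [hv, EuclideanSpace.inner_single_right, hX]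
  -- coordinate bounds
  have hpl1 : pl ≤ 1 := by
    have := real_inner_le_norm p v
    rwa [hpv, hp, hvn, one_mul] at this
  have hXbd : |X| ≤ 1 := by
    have := abs_real_inner_le_norm x v
    rwa [hxv, hx, hvn, one_mul] at this
  have hX1 : 0 < 1 + X := by
    rcases lt_or_eq_of_le (neg_le_of_abs_le hXbd) with h | h
    · linarith
    · exact absurd h.symm hx'
  -- the key scalar identity for α
  have hbp' : b + pl ≠ 0 := ne_of_gt hbp
  have hαe : 2 * α * (b + pl) = 1 - b ^ 2 := by
    rw [hα]; field_simp
  set w : EuclideanSpace ℝ (Fin (d+1)) := p - α • v with hw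
  clear_value w
  have hN2 : ‖w‖ ^ 2 = (b + α) ^ 2 := by
    have : ‖w‖ ^ 2 = ‖p‖ ^ 2 - 2 * (α * ⟪p, v⟫_ℝ) + ‖α • v‖ ^ 2 := by
      rw [hw, norm_sub_sq_real, real_inner_smul_right]
    rw [this, hp, hpv, norm_smul, hvn, mul_one, Real.norm_eq_abs, sq_abs]
    nlinarith [hαe]
  have hpl2 : pl ^ 2 ≤ 1 := by
    have := abs_real_inner_le_norm p v
    rw [hpv, hp, hvn, one_mul] at this
    nlinarith [this, sq_abs pl, abs_nonneg pl]
  have h1 : 2 * (b + pl) * (b + α) = b ^ 2 + 2 * b * pl + 1 := by linear_combination hαe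
  have h2 : (0:ℝ) < b ^ 2 + 2 * b * pl + 1 := by nlinarith [hpl2, mul_pos hbp hbp]
  have hbα : 0 < b + α := by
    have h3 : b + α = (b ^ 2 + 2 * b * pl + 1) / (2 * (b + pl)) := by
      rw [← h1]; field_simp
    rw [h3]; exact div_pos h2 (by linarith)
  have hbα' : b + α ≠ 0 := ne_of_gt hbα
  have hNpos : 0 < ‖w‖ := by
    nlinarith [hN2, mul_pos hbα hbα, norm_nonneg w]
  have hN : ‖w‖ = b + α := by
    have h0 : (‖w‖ - (b + α)) * (‖w‖ + (b + α)) = 0 := by nlinarith [hN2]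
    rcases mul_eq_zero.mp h0 with h | h
    · linarith
    · linarith
  -- c facts
  have hcn : ‖c‖ = 1 := by
    rw [hc, norm_smul, norm_inv, Real.norm_eq_abs, abs_of_pos hNpos, inv_mul_cancel₀ (ne_of_gt hNpos)]
  have hwl : w (Fin.last d) = pl - α := by
    rw [hw, hv]
    simp [PiLp.sub_apply, PiLp.smul_apply, EuclideanSpace.single_apply, hpl]
  have hcl : c (Fin.last d) = (b + α)⁻¹ * (pl - α) := by
    rw [hc]
    simp only [PiLp.smul_apply, smul_eq_mul, hwl, hN]
  have hxw : ⟪x, w⟫_ℝ = b - α * X := by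
    rw [hw, inner_sub_right, real_inner_smul_right, hxp, hxv]
  have hxc : ⟪x, c⟫_ℝ = (b + α)⁻¹ * (b - α * X) := by
    rw [hc, real_inner_smul_right, hxw, hN]
  have hcl1 : 0 < 1 + c (Fin.last d) := by
    rw [hcl]
    have : 1 + (b + α)⁻¹ * (pl - α) = (b + pl) / (b + α) := by
      field_simp
      ring
    rw [this]
    positivity
  -- square of the distance
  have key : ‖sphUnemb d s x - sphUnemb d s c‖ ^ 2 = s ^ 2 * ((1 - b ^ 2) / (b + pl) ^ 2) := by
    have hX1' : 1 + x (Fin.last d) ≠ 0 := by rw [← hX]; exact ne_of_gt hX1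
    rw [dist_formula' s x c hx hcn hX1' (ne_of_gt hcl1), hxc, hcl, ← hX]
    rw [show (1 - b ^ 2) = 2 * α * (b + pl) from hαe.symm]
    field_simp
    linear_combination (α * (1 + X)) * mul_inv_cancel₀ hbp'
  calc ‖sphUnemb d s x - sphUnemb d s c‖
      = Real.sqrt (‖sphUnemb d s x - sphUnemb d s c‖ ^ 2) :=
        (Real.sqrt_sq (norm_nonneg _)).symm
    _ = Real.sqrt (s ^ 2 * ((1 - b ^ 2) / (b + pl) ^ 2)) := by rw [key]
    _ = s * Real.sqrt ((1 - b ^ 2) / (b + pl) ^ 2) := by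
        rw [Real.sqrt_mul (sq_nonneg s), Real.sqrt_sq hs.le]
end

section
/- Cap-Ball-Duality (full set version): under the assumptions of the Cap-Ball-Duality, the image under S⁻¹ of the open hyperspherical cap C(p, b) = {x ∈ S^d : ⟨x, p⟩ > b} equals the open Euclidean ball B(c, r) ⊆ ℝ^d with c = S⁻¹((p − αv)/‖p − αv‖) and r = s√(2α/(b + p_{d+1})), where α = (1 − b²)/(2(b + p_{d+1})). -/
open scoped InnerProductSpace

set_option linter.unusedVariables false

variable {d : ℕ}

@[simp] lemma snocE_castSucc (x : EuclideanSpace ℝ (Fin d)) (t : ℝ) (i : Fin d) :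
    snocE x t i.castSucc = x i := by
  show Fin.snoc (α := fun _ => ℝ) x t i.castSucc = x i
  exact Fin.snoc_castSucc _ _ _

@[simp] lemma snocE_last (x : EuclideanSpace ℝ (Fin d)) (t : ℝ) :
    snocE x t (Fin.last d) = t := by
  show Fin.snoc (α := fun _ => ℝ) x t (Fin.last d) = t
  exact Fin.snoc_last _ _

@[simp] lemma initE_apply (y : EuclideanSpace ℝ (Fin (d+1))) (i : Fin d) :
    initE y i = y i.castSucc := rfl

lemma inner_split (y z : EuclideanSpace ℝ (Fin (d+1))) :
    ⟪y, z⟫_ℝ = ⟪initE y, initE z⟫_ℝ + y (Fin.last d) * z (Fin.last d) := by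
  simp [PiLp.inner_apply, RCLike.inner_apply, Fin.sum_univ_castSucc, initE, mul_comm]

lemma norm_sq_split (y : EuclideanSpace ℝ (Fin (d+1))) :
    ‖y‖^2 = ‖initE y‖^2 + (y (Fin.last d))^2 := by
  have h := inner_split y y
  rw [real_inner_self_eq_norm_sq, real_inner_self_eq_norm_sq] at h
  rw [h]; ring

@[simp] lemma single_castSucc (i : Fin d) :
    EuclideanSpace.single (Fin.last d) (1:ℝ) i.castSucc = 0 := by
  simp [EuclideanSpace.single_apply, (Fin.castSucc_lt_last i).ne]

@[simp] lemma single_last :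
    EuclideanSpace.single (Fin.last d) (1:ℝ) (Fin.last d) = 1 := by
  simp [EuclideanSpace.single_apply]

lemma abs_last_le (y : EuclideanSpace ℝ (Fin (d+1))) : |y (Fin.last d)| ≤ ‖y‖ := by
  have h := norm_sq_split y
  nlinarith [sq_nonneg ‖initE y‖, abs_nonneg (y (Fin.last d)), norm_nonneg y,
    sq_abs (y (Fin.last d))]

lemma sphEmb_castSucc (s : ℝ) (u : EuclideanSpace ℝ (Fin d)) (i : Fin d) :
    sphEmb d s u i.castSucc = (2 * s / (‖u‖^2 + s^2)) * u i := by
  simp [sphEmb, (Fin.castSucc_lt_last i).ne]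

lemma sphEmb_last (s : ℝ) (u : EuclideanSpace ℝ (Fin d)) :
    sphEmb d s u (Fin.last d) = 2 * s / (‖u‖^2 + s^2) * s - 1 := by
  simp [sphEmb]

lemma initE_sphEmb (s : ℝ) (u : EuclideanSpace ℝ (Fin d)) :
    initE (sphEmb d s u) = (2 * s / (‖u‖^2 + s^2)) • u := by
  ext i
  simp [sphEmb, (Fin.castSucc_lt_last i).ne]

lemma initE_smul (a : ℝ) (y : EuclideanSpace ℝ (Fin (d+1))) :
    initE (a • y) = a • initE y := by
  ext i; simp

lemma norm_sphEmb (s : ℝ) (hs : 0 < s) (u : EuclideanSpace ℝ (Fin d)) :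
    ‖sphEmb d s u‖ = 1 := by
  have hA : 0 < ‖u‖^2 + s^2 := by positivity
  have h := norm_sq_split (sphEmb d s u)
  rw [initE_sphEmb, norm_smul, sphEmb_last] at h
  rw [Real.norm_eq_abs, abs_div, abs_of_pos (by positivity : (0:ℝ) < 2*s),
    abs_of_pos hA] at h
  have h2 : ‖sphEmb d s u‖^2 = 1 := by
    rw [h]; field_simp; ring
  nlinarith [norm_nonneg (sphEmb d s u)]

lemma sphUnemb_sphEmb (s : ℝ) (hs : 0 < s) (u : EuclideanSpace ℝ (Fin d)) :
    sphUnemb d s (sphEmb d s u) = u := by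
  have hA : 0 < ‖u‖^2 + s^2 := by positivity
  unfold sphUnemb
  rw [initE_sphEmb, sphEmb_last, smul_smul]
  have : s / (1 + (2 * s / (‖u‖^2 + s^2) * s - 1)) * (2 * s / (‖u‖^2 + s^2)) = 1 := by
    field_simp; ring
  rw [this, one_smul]

lemma initE_sub_smul_single (p : EuclideanSpace ℝ (Fin (d+1))) (a : ℝ) :
    initE (p - a • EuclideanSpace.single (Fin.last d) 1) = initE p := by
  ext i; simp [(Fin.castSucc_lt_last i).ne]

lemma sphEmb_sphUnemb (s : ℝ) (hs : 0 < s) (y : EuclideanSpace ℝ (Fin (d+1)))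
    (hy : ‖y‖ = 1) (ht : -1 < y (Fin.last d)) :
    sphEmb d s (sphUnemb d s y) = y := by
  set t := y (Fin.last d) with htdef
  have ht1 : 0 < 1 + t := by linarith
  have hy' : ‖initE y‖^2 = 1 - t^2 := by
    have := norm_sq_split y; rw [hy] at this; nlinarith
  have hU : ‖sphUnemb d s y‖^2 = s^2*(1-t)/(1+t) := by
    unfold sphUnemb
    rw [norm_smul, mul_pow, Real.norm_eq_abs, sq_abs, hy', ← htdef]
    field_simp; ring
  have hA : ‖sphUnemb d s y‖^2 + s^2 = 2*s^2/(1+t) := by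
    rw [hU]; field_simp; ring
  have hval : 2 * s / (‖sphUnemb d s y‖^2 + s^2) = (1+t)/s := by
    rw [hA, div_div_eq_mul_div, div_eq_div_iff (by positivity) hs.ne']
    ring
  ext j
  refine Fin.lastCases ?_ ?_ j
  · rw [sphEmb_last, hval, ← htdef]; field_simp; ring
  · intro i
    rw [sphEmb_castSucc, hval]
    show (1+t)/s * ((s / (1 + t)) • initE y) i = y i.castSucc
    rw [PiLp.smul_apply, smul_eq_mul, initE_apply]
    field_simp

lemma key_ineq (s b π α U I : ℝ) (hs : 0 < s) (hβ : 0 < b + π) (hU : 0 ≤ U)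
    (hα : α = (1-b^2)/(2*(b+π))) :
    U - 2*(s/(b+π))*I + (s/(b+π))^2*(1-π^2) < s^2*(2*α/(b+π)) ↔
    b < 2*s/(U+s^2)*I + (2*s/(U+s^2)*s - 1)*π := by
  have hA : (0:ℝ) < U + s^2 := by positivity
  have e1 : U - 2*(s/(b+π))*I + (s/(b+π))^2*(1-π^2) - s^2*(2*α/(b+π))
      = ((b+π)*U - 2*s*I + s^2*(b-π))/(b+π) := by
    rw [hα]; field_simp; ring
  have e2 : (2*s/(U+s^2)*I + (2*s/(U+s^2)*s - 1)*π) - b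
      = -((b+π)*U - 2*s*I + s^2*(b-π))/(U+s^2) := by
    field_simp; ring
  have h1 : U - 2*(s/(b+π))*I + (s/(b+π))^2*(1-π^2) < s^2*(2*α/(b+π)) ↔
      (b+π)*U - 2*s*I + s^2*(b-π) < 0 := by
    rw [← sub_neg, e1, div_lt_iff₀ hβ, zero_mul]
  have h2 : b < 2*s/(U+s^2)*I + (2*s/(U+s^2)*s - 1)*π ↔
      (b+π)*U - 2*s*I + s^2*(b-π) < 0 := by
    rw [← sub_pos, e2, neg_div, neg_pos, div_lt_iff₀ hA, zero_mul]
  rw [h1, h2]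

lemma center_eq (s : ℝ) (hs : 0 < s) (p : EuclideanSpace ℝ (Fin (d+1))) (hp : ‖p‖ = 1)
    (b : ℝ) (hb : b ∈ Set.Ioo (-1:ℝ) 1) (hbp : 0 < b + p (Fin.last d)) (α : ℝ)
    (hα : α = (1 - b^2)/(2*(b + p (Fin.last d)))) :
    sphUnemb d s (‖p - α • EuclideanSpace.single (Fin.last d) 1‖⁻¹ •
        (p - α • EuclideanSpace.single (Fin.last d) 1)) =
      (s / (b + p (Fin.last d))) • initE p := by
  set π := p (Fin.last d) with hπdef
  have hπ2 : π^2 ≤ 1 := by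
    have h := abs_last_le p; rw [hp] at h
    nlinarith [sq_abs π, abs_nonneg π]
  have hab : 0 < α + b := by
    rw [hα]
    have he : (1-b^2)/(2*(b+π)) + b = (1 + b^2 + 2*b*π)/(2*(b+π)) := by
      field_simp; ring
    rw [he]
    apply div_pos _ (by linarith)
    nlinarith [pow_pos hbp 2]
  have hαe : α * (2*(b+π)) = 1 - b^2 := by rw [hα]; field_simp
  have hNsq : ‖p - α • EuclideanSpace.single (Fin.last d) 1‖^2 = (α + b)^2 := by
    rw [norm_sub_sq_real, real_inner_smul_right, EuclideanSpace.inner_single_right,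
      norm_smul, EuclideanSpace.norm_single, Real.norm_eq_abs, Real.norm_eq_abs,
      mul_pow, sq_abs, sq_abs, hp]
    rw [← hπdef]
    simp only [starRingEnd_apply, star_trivial]
    linear_combination (-1 : ℝ)*hαe
  have hN : ‖p - α • EuclideanSpace.single (Fin.last d) 1‖ = α + b := by
    have h0 : (‖p - α • EuclideanSpace.single (Fin.last d) 1‖ - (α+b)) *
        (‖p - α • EuclideanSpace.single (Fin.last d) 1‖ + (α+b)) = 0 := by
      linear_combination hNsq
    rcases mul_eq_zero.mp h0 with h | h
    · linarith
    · nlinarith [norm_nonneg (p - α • EuclideanSpace.single (Fin.last d) 1)]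
  have hXlast : ((p - α • EuclideanSpace.single (Fin.last d) 1 :
      EuclideanSpace ℝ (Fin (d+1)))) (Fin.last d) = π - α := by
    rw [PiLp.sub_apply, PiLp.smul_apply, single_last, smul_eq_mul, mul_one, ← hπdef]
  unfold sphUnemb
  rw [PiLp.smul_apply, smul_eq_mul, hN, hXlast, initE_smul, initE_sub_smul_single,
    smul_smul]
  congr 1
  have h1 : 1 + (α + b)⁻¹ * (π - α) = (b+π)/(α+b) := by
    field_simp [hab.ne']; ring
  rw [h1]
  rw [div_div_eq_mul_div]
  field_simp [hab.ne', hbp.ne']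


theorem stmt11 (d : ℕ) (s : ℝ) (hs : 0 < s)
    (p : EuclideanSpace ℝ (Fin (d + 1))) (hp : ‖p‖ = 1)
    (b : ℝ) (hb : b ∈ Set.Ioo (-1 : ℝ) 1) (hbp : 0 < b + p (Fin.last d))
    (α : ℝ) (hα : α = (1 - b ^ 2) / (2 * (b + p (Fin.last d)))) :
    sphUnemb d s '' {x | ‖x‖ = 1 ∧ b < ⟪x, p⟫_ℝ} =
      Metric.ball
        (sphUnemb d s (‖p - α • EuclideanSpace.single (Fin.last d) 1‖⁻¹ •
          (p - α • EuclideanSpace.single (Fin.last d) 1)))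
        (s * Real.sqrt (2 * α / (b + p (Fin.last d)))) := by
  set π := p (Fin.last d) with hπdef
  have hc := center_eq s hs p hp b hb hbp α hα
  have hp' : ‖initE p‖^2 = 1 - π^2 := by
    have h := norm_sq_split p; rw [hp, one_pow] at h; linarith
  have hrs : s * Real.sqrt (2*α/(b+π)) = Real.sqrt (s^2*(2*α/(b+π))) := by
    rw [Real.sqrt_mul (sq_nonneg s), Real.sqrt_sq hs.le]
  ext u
  simp only [Set.mem_image, Set.mem_setOf_eq, Metric.mem_ball]
  rw [hc, hrs]
  constructor
  · rintro ⟨x, ⟨hx1, hx2⟩, rfl⟩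
    have habs := abs_last_le x; rw [hx1] at habs
    have h1 : -1 ≤ x (Fin.last d) := (abs_le.mp habs).1
    have htlb : -1 < x (Fin.last d) := by
      rcases h1.lt_or_eq with h | h
      · exact h
      · exfalso
        have h2 := norm_sq_split x
        rw [hx1, one_pow, ← h] at h2
        have h3 : ‖initE x‖ = 0 := by nlinarith [norm_nonneg (initE x)]
        have h4 : initE x = 0 := norm_eq_zero.mp h3
        have h5 := inner_split x p
        rw [h4, inner_zero_left, ← h, ← hπdef] at h5
        rw [h5] at hx2
        linarith
    have hxe : x = sphEmb d s (sphUnemb d s x) := (sphEmb_sphUnemb s hs x hx1 htlb).symm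
    set w := sphUnemb d s x with hw
    have hinner : ⟪x, p⟫_ℝ = 2*s/(‖w‖^2+s^2) * ⟪w, initE p⟫_ℝ
        + (2*s/(‖w‖^2+s^2)*s - 1)*π := by
      rw [hxe, inner_split, initE_sphEmb, real_inner_smul_left, sphEmb_last, ← hπdef]
    rw [hinner] at hx2
    rw [dist_eq_norm, Real.lt_sqrt (norm_nonneg _), norm_sub_sq_real,
      real_inner_smul_right, norm_smul, mul_pow, Real.norm_eq_abs, sq_abs, hp']
    have hk := (key_ineq s b π α (‖w‖^2) ⟪w, initE p⟫_ℝ hs hbp (sq_nonneg _) hα).mpr hx2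
    linarith
  · intro h
    refine ⟨sphEmb d s u, ⟨norm_sphEmb s hs u, ?_⟩, sphUnemb_sphEmb s hs u⟩
    have hinner : ⟪sphEmb d s u, p⟫_ℝ = 2*s/(‖u‖^2+s^2) * ⟪u, initE p⟫_ℝ
        + (2*s/(‖u‖^2+s^2)*s - 1)*π := by
      rw [inner_split, initE_sphEmb, real_inner_smul_left, sphEmb_last, ← hπdef]
    rw [hinner]
    apply (key_ineq s b π α (‖u‖^2) ⟪u, initE p⟫_ℝ hs hbp (sq_nonneg _) hα).mp
    rw [dist_eq_norm, Real.lt_sqrt (norm_nonneg _), norm_sub_sq_real,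
      real_inner_smul_right, norm_smul, mul_pow, Real.norm_eq_abs, sq_abs, hp'] at h
    linarith
end

section
/- For unit vectors x, ĉ ∈ ℝ^{d+1} with x_{d+1} ≠ −1 and ĉ_{d+1} ≠ −1, and s > 0: ‖S⁻¹(x) − S⁻¹(ĉ)‖ = √2 · s · √((1 − ⟨x, ĉ⟩)/((1 + x_{d+1})(1 + ĉ_{d+1}))). -/
open scoped InnerProductSpace

lemma initE_inner {d : ℕ} (x c : EuclideanSpace ℝ (Fin (d + 1))) :
    ⟪x, c⟫_ℝ = ⟪initE x, initE c⟫_ℝ + x (Fin.last d) * c (Fin.last d) := by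
  simp only [PiLp.inner_apply, RCLike.inner_apply, conj_trivial, initE,
    WithLp.equiv_symm_apply, WithLp.ofLp_toLp, Fin.sum_univ_castSucc, mul_comm]

lemma initE_norm_sq {d : ℕ} (y : EuclideanSpace ℝ (Fin (d + 1))) :
    ‖initE y‖ ^ 2 = ‖y‖ ^ 2 - y (Fin.last d) ^ 2 := by
  have h := initE_inner y y
  rw [real_inner_self_eq_norm_sq, real_inner_self_eq_norm_sq] at h
  nlinarith [h]

lemma sq_apply_le {n : ℕ} (y : EuclideanSpace ℝ (Fin n)) (i : Fin n) :
    y i ^ 2 ≤ ‖y‖ ^ 2 := by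
  rw [← real_inner_self_eq_norm_sq, PiLp.inner_apply]
  simp only [RCLike.inner_apply, conj_trivial]
  have : y i ^ 2 = y i * y i := sq (y i) ▸ sq (y i) ▸ (sq (y i)).symm ▸ rfl
  calc y i ^ 2 = y i * y i := sq (y i)
    _ ≤ ∑ j, y j * y j :=
      Finset.single_le_sum (fun j _ => mul_self_nonneg (y j)) (Finset.mem_univ i)

theorem stmt12 (d : ℕ) (s : ℝ) (hs : 0 < s) (x c : EuclideanSpace ℝ (Fin (d + 1)))
    (hx : ‖x‖ = 1) (hc : ‖c‖ = 1)
    (hx' : x (Fin.last d) ≠ -1) (hc' : c (Fin.last d) ≠ -1) :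
    ‖sphUnemb d s x - sphUnemb d s c‖ =
      Real.sqrt 2 * s *
        Real.sqrt ((1 - ⟪x, c⟫_ℝ) / ((1 + x (Fin.last d)) * (1 + c (Fin.last d)))) := by
  have hxl : x (Fin.last d) ^ 2 ≤ 1 := by have := sq_apply_le x (Fin.last d); rw [hx] at this; simpa using this
  have hcl : c (Fin.last d) ^ 2 ≤ 1 := by have := sq_apply_le c (Fin.last d); rw [hc] at this; simpa using this
  have hA : 0 < 1 + x (Fin.last d) := by
    rcases lt_or_eq_of_le (by nlinarith : (-1 : ℝ) ≤ x (Fin.last d)) with h | h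
    · linarith
    · exact absurd h.symm hx'
  have hB : 0 < 1 + c (Fin.last d) := by
    rcases lt_or_eq_of_le (by nlinarith : (-1 : ℝ) ≤ c (Fin.last d)) with h | h
    · linarith
    · exact absurd h.symm hc'
  have h1 : ‖initE x‖ ^ 2 = 1 - x (Fin.last d) ^ 2 := by rw [initE_norm_sq, hx]; ring
  have h2 : ‖initE c‖ ^ 2 = 1 - c (Fin.last d) ^ 2 := by rw [initE_norm_sq, hc]; ring
  have hip := initE_inner x c
  have hle : ⟪x, c⟫_ℝ ≤ 1 := by
    have := real_inner_le_norm x c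
    rw [hx, hc] at this; linarith
  have hsq : ‖sphUnemb d s x - sphUnemb d s c‖ ^ 2 =
      2 * s ^ 2 * ((1 - ⟪x, c⟫_ℝ) / ((1 + x (Fin.last d)) * (1 + c (Fin.last d)))) := by
    rw [sphUnemb, sphUnemb, @norm_sub_sq_real, norm_smul, norm_smul,
      real_inner_smul_left, real_inner_smul_right, mul_pow, mul_pow, Real.norm_eq_abs, Real.norm_eq_abs, sq_abs, sq_abs,
      h1, h2, hip]
    field_simp
    ring
  have hq : 0 ≤ (1 - ⟪x, c⟫_ℝ) / ((1 + x (Fin.last d)) * (1 + c (Fin.last d))) := by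
    apply div_nonneg (by linarith) (by positivity)
  calc ‖sphUnemb d s x - sphUnemb d s c‖
      = Real.sqrt (‖sphUnemb d s x - sphUnemb d s c‖ ^ 2) :=
        (Real.sqrt_sq (norm_nonneg _)).symm
    _ = Real.sqrt (2 * s ^ 2 * ((1 - ⟪x, c⟫_ℝ) / ((1 + x (Fin.last d)) * (1 + c (Fin.last d))))) := by
        rw [hsq]
    _ = Real.sqrt 2 * s * Real.sqrt ((1 - ⟪x, c⟫_ℝ) / ((1 + x (Fin.last d)) * (1 + c (Fin.last d)))) := by
        rw [Real.sqrt_mul (by positivity), Real.sqrt_mul (by norm_num), Real.sqrt_sq hs.le]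
end

section
/- Simplified center formula: under the Cap-Ball-Duality assumptions, the ball center c = S⁻¹((p − αv)/‖p − αv‖) satisfies c = s·p_{1..d} / (√(1 − p_{d+1}² + (p_{d+1} − α)²) + p_{d+1} − α), where α = (1 − b²)/(2(b + p_{d+1})); in particular c is collinear with p_{1..d}. -/
open scoped InnerProductSpace

theorem stmt13 (d : ℕ) (s : ℝ) (hs : 0 < s)
    (p : EuclideanSpace ℝ (Fin (d + 1))) (hp : ‖p‖ = 1)
    (b : ℝ) (hb : b ∈ Set.Ioo (-1 : ℝ) 1) (hbp : 0 < b + p (Fin.last d))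
    (α : ℝ) (hα : α = (1 - b ^ 2) / (2 * (b + p (Fin.last d)))) :
    sphUnemb d s (‖p - α • EuclideanSpace.single (Fin.last d) 1‖⁻¹ •
        (p - α • EuclideanSpace.single (Fin.last d) 1)) =
      (s / (Real.sqrt (1 - p (Fin.last d) ^ 2 + (p (Fin.last d) - α) ^ 2) +
        p (Fin.last d) - α)) • initE p := by
  have hP2 : ∑ j : Fin d, p j.castSucc ^ 2 + p (Fin.last d) ^ 2 = 1 := by
    have h := hp
    rw [EuclideanSpace.norm_eq] at h
    have h1 := Real.sqrt_eq_one.mp h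
    rw [Fin.sum_univ_castSucc] at h1
    simpa using h1
  set P := p (Fin.last d) with hPdef
  set N := ‖p - α • EuclideanSpace.single (Fin.last d) 1‖ with hNdef
  have hNsq : N ^ 2 = 1 - P ^ 2 + (P - α) ^ 2 := by
    have h := norm_sub_sq_real p (α • EuclideanSpace.single (Fin.last d) 1)
    rw [real_inner_smul_right, EuclideanSpace.inner_single_right, hp, norm_smul,
      EuclideanSpace.norm_single] at h
    simp only [RCLike.star_def, conj_trivial, norm_one, mul_one] at h
    rw [← hNdef] at h
    rw [h, Real.norm_eq_abs, sq_abs]; ring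
  have hsqrt : Real.sqrt (1 - P ^ 2 + (P - α) ^ 2) = N := by
    rw [← hNsq, Real.sqrt_sq (norm_nonneg _)]
  ext i
  simp only [sphUnemb, initE, WithLp.equiv_symm_apply, PiLp.toLp_apply, PiLp.smul_apply, PiLp.sub_apply,
    smul_eq_mul, EuclideanSpace.single_apply]
  have hne : (Fin.castSucc i = Fin.last d) = False := by
    simp [Fin.ext_iff]; omega
  simp only [← hNdef, hne, if_true, if_false, eq_self_iff_true, mul_zero, sub_zero, hsqrt]
  by_cases hA : p i.castSucc = 0
  · simp [hA]
  · have h1P : 0 < 1 - P ^ 2 := by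
      have hle : p i.castSucc ^ 2 ≤ ∑ j : Fin d, p j.castSucc ^ 2 :=
        Finset.single_le_sum (f := fun j => p j.castSucc ^ 2)
          (fun _ _ => sq_nonneg _) (Finset.mem_univ i)
      have hpos := sq_pos_iff.mpr hA
      nlinarith
    have hN0 : 0 < N := by nlinarith [norm_nonneg (p - α • EuclideanSpace.single (Fin.last d) 1), hNsq]
    have hNt : 0 < N + (P - α) := by nlinarith
    have hden : 1 + N⁻¹ * (P - α) ≠ 0 := by
      have : 1 + N⁻¹ * (P - α) = (N + (P - α)) / N := by field_simp
      rw [this]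
      positivity
    simp only [mul_one, ← hPdef]
    have hN' : N ≠ 0 := ne_of_gt hN0
    have hNt' : N + P - α ≠ 0 := by linarith
    field_simp
    ring
end

section
/- Cosine ratio limit: for x, y ∈ ℝ^d with ‖x‖ = ‖y‖ = s > 0 and x ≠ ±y, the cosine of the angle between x and y equals the cosine of the angle between S(x) and S(y), i.e., ⟨x,y⟩/(‖x‖‖y‖) = ⟨S(x),S(y)⟩. -/
open scoped InnerProductSpace

lemma inner_snocE {d : ℕ} (x y : EuclideanSpace ℝ (Fin d)) (a b : ℝ) :
    ⟪snocE x a, snocE y b⟫_ℝ = ⟪x, y⟫_ℝ + a * b := by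
  simp [snocE, PiLp.inner_apply, Fin.sum_univ_castSucc, WithLp.equiv_symm_apply,
    WithLp.equiv_apply, Fin.snoc_castSucc, Fin.snoc_last, mul_comm]

lemma inner_snocE_single {d : ℕ} (x : EuclideanSpace ℝ (Fin d)) (a : ℝ) :
    ⟪snocE x a, EuclideanSpace.single (Fin.last d) 1⟫_ℝ = a := by
  simp [snocE, PiLp.inner_apply, EuclideanSpace.single_apply, WithLp.equiv_symm_apply,
    WithLp.equiv_apply, Fin.snoc_castSucc, Fin.snoc_last]

lemma inner_single_snocE {d : ℕ} (x : EuclideanSpace ℝ (Fin d)) (a : ℝ) :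
    ⟪EuclideanSpace.single (Fin.last d) (1:ℝ), snocE x a⟫_ℝ = a := by
  rw [real_inner_comm]; exact inner_snocE_single x a

lemma inner_single_single' {d : ℕ} :
    ⟪EuclideanSpace.single (Fin.last d) (1:ℝ), EuclideanSpace.single (Fin.last d) 1⟫_ℝ = 1 := by
  simp [PiLp.inner_apply, EuclideanSpace.single_apply]

theorem stmt18 (d : ℕ) (s : ℝ) (hs : 0 < s) (x y : EuclideanSpace ℝ (Fin d))
    (hx : ‖x‖ = s) (hy : ‖y‖ = s) (hxy : x ≠ y) (hxy' : x ≠ -y) :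
    ⟪x, y⟫_ℝ / (‖x‖ * ‖y‖) = ⟪sphEmb d s x, sphEmb d s y⟫_ℝ := by
  have hs' : s ≠ 0 := ne_of_gt hs
  simp only [sphEmb, hx, hy, inner_sub_left, inner_sub_right, real_inner_smul_left,
    real_inner_smul_right, inner_snocE, inner_snocE_single, inner_single_snocE,
    inner_single_single']
  field_simp
  ring
end
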